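/- Let a : Fin m → {-1,1}, w₀ a probability vector, W⁻ = ∑_{aᵢ=-1} w₀(i) > 0, W⁺ = 1 - W⁻, and U(t) = 1/(W⁺ + e^{2t}·W⁻). Then the AdaBoost flow solution wₜ(i) = w₀(i)·e^{-t·aᵢ}/∑_p w₀(p)·e^{-t·a_p} satisfies wₜ = L[w₀] + D[w₀]·U(t) for all t ≥ 0, where L[w₀](i) = w₀(i)/W⁻ if aᵢ = -1 and 0 otherwise, and D[w₀](i) = w₀(i) if aᵢ = 1 and -(W⁺/W⁻)·w₀(i) if aᵢ = -1. Consequently wₜ → L[w₀] as t → +∞. -/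

import Mathlib

/-!
Splitting the normalising sum by the sign of `aᵢ` gives
`∑_q w₀(q) e^{-t a_q} = e^{-t} (W⁺ + e^{2t} W⁻) = e^{-t} / U(t)`, so `wₜ(i) = w₀(i) e^{t(1 - aᵢ)} U(t)`.
For `aᵢ = 1` this is `D(i) U(t)`; for `aᵢ = -1` it is `L(i) + D(i) U(t)` because
`1 = U(t) (W⁺ + e^{2t} W⁻)`; for `t ≥ 0` this factor is at least `W⁺ + W⁻ = 1`, so nothing
degenerates. Since `U(t) → 0`, the flow converges to `L`.
-/

open Real Finset Filter Topology

lemma mul_exp_neg_mul_of_sign {a : ℝ} (ha : a = 1 ∨ a = -1) (x t : ℝ) :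
    x * exp (-t * a) = exp (-t) * (x + (exp (2 * t) - 1) * if a = -1 then x else 0) := by
  have h2t : exp (-t) * exp (2 * t) = exp t := by rw [← exp_add]; ring_nf
  rcases ha with rfl | rfl
  · norm_num [mul_comm]
  · simp only [if_true, mul_neg_one, neg_neg]
    linear_combination (-x) * h2t

lemma sum_mul_exp_neg_mul_of_sign {ι : Type*} [Fintype ι] {a : ι → ℝ}
    (ha : ∀ i, a i = 1 ∨ a i = -1) (w : ι → ℝ) (t : ℝ) :
    ∑ i, w i * exp (-t * a i) =
      exp (-t) * (∑ i, w i + (exp (2 * t) - 1) * ∑ i ∈ univ.filter (fun i => a i = -1), w i) := by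
  simp only [mul_exp_neg_mul_of_sign (ha _), ← mul_sum, sum_add_distrib, sum_filter]

lemma tendsto_one_div_add_exp_mul_atTop {c W : ℝ} (hW : 0 < W) :
    Tendsto (fun t => 1 / (c + exp (2 * t) * W)) atTop (𝓝 0) := by
  simp only [one_div]
  refine Tendsto.inv_tendsto_atTop (tendsto_atTop_add_const_left _ _ ?_)
  exact (tendsto_exp_atTop.comp (tendsto_id.const_mul_atTop two_pos)).atTop_mul_const hW

theorem stmt13_general (m : ℕ) (a w0 : Fin m → ℝ)
    (ha : ∀ i, a i = 1 ∨ a i = -1)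
    (hw0sum : ∑ i, w0 i = 1)
    (Wm Wp : ℝ)
    (hWm : Wm = ∑ i ∈ Finset.univ.filter (fun i => a i = -1), w0 i)
    (hWmpos : 0 < Wm) (hWp : Wp = 1 - Wm)
    (U : ℝ → ℝ) (hU : ∀ t, U t = 1 / (Wp + Real.exp (2 * t) * Wm))
    (w : ℝ → Fin m → ℝ)
    (hw : ∀ t i, w t i = w0 i * Real.exp (-t * a i) / ∑ q, w0 q * Real.exp (-t * a q))
    (L D : Fin m → ℝ)
    (hL : ∀ i, L i = if a i = -1 then w0 i / Wm else 0)
    (hD : ∀ i, D i = if a i = -1 then -(Wp / Wm) * w0 i else w0 i) :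
    (∀ t : ℝ, 0 ≤ t → ∀ i, w t i = L i + D i * U t) ∧
    (∀ i, Filter.Tendsto (fun t => w t i) Filter.atTop (nhds (L i))) := by
  have hden : ∀ t, ∑ q, w0 q * exp (-t * a q) = exp (-t) * (Wp + exp (2 * t) * Wm) := fun t => by
    rw [sum_mul_exp_neg_mul_of_sign ha, hw0sum, ← hWm, hWp]; ring
  have hden_pos : ∀ t, 0 ≤ t → 0 < Wp + exp (2 * t) * Wm := fun t ht => by
    nlinarith [one_le_exp (by linarith : 0 ≤ 2 * t)]
  have hflow : ∀ t, 0 ≤ t → ∀ i, w t i = L i + D i * U t := by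
    intro t ht i
    have hd := (hden_pos t ht).ne'
    rw [hw, hden, hL, hD, hU, mul_exp_neg_mul_of_sign (ha i), mul_div_mul_left _ _ (exp_pos _).ne']
    rcases ha i with h | h <;> simp only [h, if_pos, if_neg (by norm_num : (1 : ℝ) ≠ -1)]
    · ring
    · field_simp
      rw [hWp]
      ring
  refine ⟨hflow, fun i => ?_⟩
  have hlim : Tendsto (fun t => L i + D i * U t) atTop (𝓝 (L i)) := by
    simpa [funext hU] using ((tendsto_one_div_add_exp_mul_atTop hWmpos).const_mul (D i)).const_add (L i)
  exact hlim.congr' (eventually_atTop.2 ⟨0, fun t ht => (hflow t ht i).symm⟩)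

theorem stmt13 (m : ℕ) (a w0 : Fin m → ℝ)
    (ha : ∀ i, a i = 1 ∨ a i = -1)
    (hw0 : ∀ i, 0 ≤ w0 i) (hw0sum : ∑ i, w0 i = 1)
    (Wm Wp : ℝ)
    (hWm : Wm = ∑ i ∈ Finset.univ.filter (fun i => a i = -1), w0 i)
    (hWmpos : 0 < Wm) (hWp : Wp = 1 - Wm)
    (U : ℝ → ℝ) (hU : ∀ t, U t = 1 / (Wp + Real.exp (2 * t) * Wm))
    (w : ℝ → Fin m → ℝ)
    (hw : ∀ t i, w t i = w0 i * Real.exp (-t * a i) / ∑ q, w0 q * Real.exp (-t * a q))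
    (L D : Fin m → ℝ)
    (hL : ∀ i, L i = if a i = -1 then w0 i / Wm else 0)
    (hD : ∀ i, D i = if a i = -1 then -(Wp / Wm) * w0 i else w0 i) :
    (∀ t : ℝ, 0 ≤ t → ∀ i, w t i = L i + D i * U t) ∧
    (∀ i, Filter.Tendsto (fun t => w t i) Filter.atTop (nhds (L i))) :=
  stmt13_general m a w0 ha hw0sum Wm Wp hWm hWmpos hWp U hU w hw L D hL hD
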